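/- Let V = ℝ² with basis vectors H and Z, and let B : V × V → ℝ be the symmetric bilinear form with B(H,H) = 12, B(H,Z) = 40, B(Z,Z) = 192. Set C = 15H − 3Z. Then B(Z,Z) = 192, B(Z,C) = 24, and B(C,C) = 828; consequently, for all real numbers a, b, a′, b′ ≥ 0 with (a,b) ≠ (0,0) and (a′,b′) ≠ (0,0), one has B(aZ + bC, a′Z + b′C) > 0. In particular, any two nonzero elements of the cone spanned by Z and C pair strictly positively under B. -/
import Mathlib

namespace EPWCone5

/-- The intersection pairing on `N₂(Ỹ∨) = ℝ²` in the basis `H = h²`, `Z`: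
`B(H,H) = 12`, `B(H,Z) = 40`, `B(Z,Z) = 192`. -/
def B (x y : ℝ × ℝ) : ℝ :=
  12 * x.1 * y.1 + 40 * (x.1 * y.2 + x.2 * y.1) + 192 * x.2 * y.2

/-- The class `H = h²`. -/
def H : ℝ × ℝ := (1, 0)

/-- The class `Z` of the invariant surface. -/
def Z : ℝ × ℝ := (0, 1)

/-- The class `C = c₂ = 15H - 3Z`. -/
def C : ℝ × ℝ := (15 : ℝ) • H - (3 : ℝ) • Z

/-- `B(Z,Z) = 192`, `B(Z,C) = 24`, `B(C,C) = 828`, and any two nonzero elements of the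
cone spanned by `Z` and `C` pair strictly positively under `B`. -/
theorem cone_positive :
    B Z Z = 192 ∧ B Z C = 24 ∧ B C C = 828 ∧
    ∀ a b a' b' : ℝ, 0 ≤ a → 0 ≤ b → 0 ≤ a' → 0 ≤ b' →
      (a, b) ≠ (0, 0) → (a', b') ≠ (0, 0) →
      0 < B (a • Z + b • C) (a' • Z + b' • C) := by
  refine ⟨by norm_num [B, Z, C, H], by norm_num [B, Z, C, H], by norm_num [B, Z, C, H], ?_⟩
  intro a b a' b' ha hb ha' hb' hab hab'
  have h1 : 0 < a ∨ 0 < b := by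
    rcases lt_or_eq_of_le ha with h | h
    · exact Or.inl h
    rcases lt_or_eq_of_le hb with h2 | h2
    · exact Or.inr h2
    · exact absurd (by rw [← h, ← h2]) hab
  have h2 : 0 < a' ∨ 0 < b' := by
    rcases lt_or_eq_of_le ha' with h | h
    · exact Or.inl h
    rcases lt_or_eq_of_le hb' with h2 | h2
    · exact Or.inr h2
    · exact absurd (by rw [← h, ← h2]) hab'
  have : B (a • Z + b • C) (a' • Z + b' • C)
      = 192 * (a * a') + 24 * (a * b' + a' * b) + 828 * (b * b') := by
    simp [B, Z, C, H]; ring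
  rw [this]
  rcases h1 with h1 | h1 <;> rcases h2 with h2 | h2 <;> nlinarith
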